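/- Let w_1 be the polynomial of degree ≤ k on V_i determined by the conditions w_1(x_{i+1/2}) = 0 and (ᾱ_i w_1, v')_{V_i} = (g, v*)_{V_i} for all v in P_k(V_i) with zero mean (equivalently v ∈ P_k \ P_0), where ᾱ_i > 0 is a constant and g ∈ L²(V_i) is given. Then w_1 exists, is unique, and its Legendre coefficients c_{i,m} (w_1 = Σ_{m=0}^k c_{i,m} L_{i,m}) satisfy |c_{i,m}| ≤ C (h_i/ᾱ_i) ‖g‖_{L^∞(V_i)} for all m = 0,...,k, hence ‖w_1‖_{L²(V_i)} ≤ C (h_i^{3/2}/ᾱ_i) ‖g‖_{L^∞(V_i)}. -/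

import Mathlib

/-- The Legendre polynomial of degree `k` on `[-1,1]`, via the Rodrigues formula. -/
noncomputable def legendreP (k : ℕ) : Polynomial ℝ :=
  Polynomial.C ((2 ^ k * (Nat.factorial k) : ℝ)⁻¹) *
    ((fun q => Polynomial.derivative q)^[k] ((Polynomial.X ^ 2 - 1) ^ k))

/-- The Legendre polynomial of degree `m` shifted to the interval `[a,b]`. -/
noncomputable def legOn (a b : ℝ) (m : ℕ) : Polynomial ℝ :=
  (legendreP m).comp (Polynomial.C (2 / (b - a)) * Polynomial.X +
    Polynomial.C (-(a + b) / (b - a)))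

/-- The polynomial antiderivative of `p` vanishing at `a`
(so `polyAnti a (legOn a b m)` is the test function `φ_{m+1}`). -/
noncomputable def polyAnti (a : ℝ) (p : Polynomial ℝ) : Polynomial ℝ :=
  (∑ n ∈ Finset.range (p.natDegree + 1),
      Polynomial.C (p.coeff n / (n + 1)) * Polynomial.X ^ (n + 1)) -
    Polynomial.C (∑ n ∈ Finset.range (p.natDegree + 1), p.coeff n / (n + 1) * a ^ (n + 1))


open Polynomial intervalIntegral

lemma polyCont (p : ℝ[X]) : Continuous fun x : ℝ => p.eval x := p.continuous

lemma polyII (p q : ℝ[X]) (a b : ℝ) :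
    IntervalIntegrable (fun t => p.eval t * q.eval t) MeasureTheory.volume a b :=
  (p.continuous.mul q.continuous).intervalIntegrable a b

lemma polyFTC (p : ℝ[X]) (a b : ℝ) :
    ∫ t in a..b, p.derivative.eval t = p.eval b - p.eval a := by
  apply intervalIntegral.integral_deriv_eq_sub' (fun x => p.eval x)
  · funext x; exact Polynomial.deriv p
  · intro x _; exact p.differentiableAt
  · exact p.derivative.continuous.continuousOn

lemma polyIBP (p q : ℝ[X]) (a b : ℝ) :
    ∫ t in a..b, p.eval t * q.derivative.eval t =
      p.eval b * q.eval b - p.eval a * q.eval a -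
        ∫ t in a..b, p.derivative.eval t * q.eval t := by
  have h := polyFTC (p * q) a b
  rw [Polynomial.derivative_mul] at h
  have h2 : ∫ t in a..b, (Polynomial.derivative p * q + p * Polynomial.derivative q).eval t
      = (∫ t in a..b, p.derivative.eval t * q.eval t)
        + ∫ t in a..b, p.eval t * q.derivative.eval t := by
    rw [← intervalIntegral.integral_add (polyII _ _ _ _) (polyII _ _ _ _)]
    simp [Polynomial.eval_add]
  rw [h2] at h
  simp only [Polynomial.eval_mul] at h
  linarith

lemma dvd_iter_deriv (r : ℝ) (m : ℕ) (s : ℝ[X]) :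
    ∀ j ≤ m, (X - C r) ^ (m - j) ∣ Polynomial.derivative^[j] ((X - C r) ^ m * s) := by
  intro j
  induction j with
  | zero => intro _; simpa using Dvd.intro s rfl
  | succ j ih =>
    intro hj
    obtain ⟨t, ht⟩ := ih (Nat.le_of_succ_le hj)
    rw [Function.iterate_succ_apply', ht, Polynomial.derivative_mul, derivative_X_sub_C_pow]
    have h1 : m - (j+1) = (m - j) - 1 := by omega
    rw [h1]
    exact dvd_add (Dvd.dvd.mul_right (Dvd.dvd.mul_left (dvd_refl _) _) t)
      (Dvd.dvd.mul_right (pow_dvd_pow _ (by omega)) _)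

lemma qpoly_factor (m : ℕ) :
    ((X : ℝ[X]) ^ 2 - 1) ^ m = (X - C 1) ^ m * (X - C (-1)) ^ m := by
  rw [← mul_pow]; congr 1; ring_nf; simp [Polynomial.C_neg]; ring

lemma boundary_vanish_one (m j : ℕ) (hj : j < m) :
    (Polynomial.derivative^[j] (((X : ℝ[X]) ^ 2 - 1) ^ m)).eval 1 = 0 := by
  obtain ⟨t, ht⟩ := dvd_iter_deriv 1 m ((X - C (-1)) ^ m) j (le_of_lt hj)
  rw [qpoly_factor, ht]
  simp [zero_pow (by omega : m - j ≠ 0)]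

lemma boundary_vanish_neg_one (m j : ℕ) (hj : j < m) :
    (Polynomial.derivative^[j] (((X : ℝ[X]) ^ 2 - 1) ^ m)).eval (-1) = 0 := by
  obtain ⟨t, ht⟩ := dvd_iter_deriv (-1) m ((X - C 1) ^ m) j (le_of_lt hj)
  rw [qpoly_factor, mul_comm ((X - C 1 : ℝ[X]) ^ m) _, ht]
  simp [zero_pow (by omega : m - j ≠ 0)]

lemma polyIBP_iter (n : ℕ) :
    ∀ (p q : ℝ[X]),
    (∀ j < n, (Polynomial.derivative^[j] q).eval 1 = 0
      ∧ (Polynomial.derivative^[j] q).eval (-1) = 0) →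
    ∫ t in (-1:ℝ)..1, p.eval t * (Polynomial.derivative^[n] q).eval t
      = (-1 : ℝ) ^ n * ∫ t in (-1:ℝ)..1, (Polynomial.derivative^[n] p).eval t * q.eval t := by
  induction n with
  | zero => intro p q _; simp
  | succ n ih =>
    intro p q hq
    have h1 : ∫ t in (-1:ℝ)..1, p.eval t * (Polynomial.derivative^[n+1] q).eval t
        = - ∫ t in (-1:ℝ)..1, p.derivative.eval t * (Polynomial.derivative^[n] q).eval t := by
      rw [Function.iterate_succ_apply', polyIBP p (Polynomial.derivative^[n] q) (-1) 1,
        (hq n (Nat.lt_succ_self n)).1, (hq n (Nat.lt_succ_self n)).2]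
      ring
    rw [h1, ih p.derivative q (fun j hj => hq j (hj.trans (Nat.lt_succ_self n))),
      ← Function.iterate_succ_apply]
    ring

lemma legendreP_def' (k : ℕ) : legendreP k =
    Polynomial.C ((2 ^ k * (Nat.factorial k) : ℝ)⁻¹)
      * Polynomial.derivative^[k] (((X : ℝ[X]) ^ 2 - 1) ^ k) := by
  rfl

lemma rodC_ne_zero (k : ℕ) : ((2 ^ k * (Nat.factorial k) : ℝ)⁻¹) ≠ 0 := by
  positivity

lemma natDegree_qpoly (m : ℕ) : (((X : ℝ[X]) ^ 2 - 1) ^ m).natDegree = 2 * m := by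
  rw [Polynomial.natDegree_pow]
  have : ((X : ℝ[X]) ^ 2 - 1) = X ^ 2 - Polynomial.C 1 := by simp
  rw [this, Polynomial.natDegree_X_pow_sub_C, Nat.mul_comm]

lemma qpoly_monic (m : ℕ) : (((X : ℝ[X]) ^ 2 - 1) ^ m).Monic := by
  apply Polynomial.Monic.pow
  have : ((X : ℝ[X]) ^ 2 - 1) = X ^ 2 - Polynomial.C 1 := by simp
  rw [this]
  exact Polynomial.monic_X_pow_sub_C 1 two_ne_zero

lemma coeff_iter_deriv_qpoly (m : ℕ) :
    (Polynomial.derivative^[m] (((X : ℝ[X]) ^ 2 - 1) ^ m)).coeff m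
      = ((2 * m).descFactorial m : ℝ) := by
  rw [Polynomial.coeff_iterate_derivative]
  have h1 : m + m = 2 * m := by omega
  rw [h1]
  have h2 : (((X : ℝ[X]) ^ 2 - 1) ^ m).coeff (2 * m) = 1 := by
    have := (qpoly_monic m).coeff_natDegree
    rwa [natDegree_qpoly] at this
  rw [h2]
  simp

lemma natDegree_iter_deriv_qpoly (m : ℕ) :
    (Polynomial.derivative^[m] (((X : ℝ[X]) ^ 2 - 1) ^ m)).natDegree = m := by
  apply le_antisymm
  · have := Polynomial.natDegree_iterate_derivative (((X : ℝ[X]) ^ 2 - 1) ^ m) m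
    rwa [natDegree_qpoly, (by omega : 2 * m - m = m)] at this
  · apply Polynomial.le_natDegree_of_ne_zero
    rw [coeff_iter_deriv_qpoly]
    have h0 : (2 * m).descFactorial m ≠ 0 := by
      rw [Ne, Nat.descFactorial_eq_zero_iff_lt]; omega
    exact_mod_cast h0

lemma natDegree_legendreP (m : ℕ) : (legendreP m).natDegree = m := by
  rw [legendreP_def', Polynomial.natDegree_C_mul (rodC_ne_zero m), natDegree_iter_deriv_qpoly]

lemma coeff_legendreP_ne_zero (m : ℕ) : (legendreP m).coeff m ≠ 0 := by
  rw [legendreP_def', Polynomial.coeff_C_mul, coeff_iter_deriv_qpoly]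
  have h0 : (2 * m).descFactorial m ≠ 0 := by
    rw [Ne, Nat.descFactorial_eq_zero_iff_lt]; omega
  have h1 : ((2 * m).descFactorial m : ℝ) ≠ 0 := by exact_mod_cast h0
  exact mul_ne_zero (rodC_ne_zero m) h1

lemma legendreP_ne_zero (m : ℕ) : legendreP m ≠ 0 := fun h => by
  have := coeff_legendreP_ne_zero m; rw [h] at this; simp at this

lemma legendreP_orthogonal_aux (n m : ℕ) (hnm : n < m) :
    ∫ t in (-1:ℝ)..1, (legendreP n).eval t * (legendreP m).eval t = 0 := by
  have key : ∫ t in (-1:ℝ)..1,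
      (Polynomial.derivative^[n] (((X : ℝ[X]) ^ 2 - 1) ^ n)).eval t
        * (Polynomial.derivative^[m] (((X : ℝ[X]) ^ 2 - 1) ^ m)).eval t = 0 := by
    rw [polyIBP_iter m _ _ (fun j hj => ⟨boundary_vanish_one m j hj, boundary_vanish_neg_one m j hj⟩)]
    have hz : Polynomial.derivative^[m]
        (Polynomial.derivative^[n] (((X : ℝ[X]) ^ 2 - 1) ^ n)) = 0 := by
      apply Polynomial.iterate_derivative_eq_zero
      rw [natDegree_iter_deriv_qpoly]; exact hnm
    rw [hz]
    simp
  calc ∫ t in (-1:ℝ)..1, (legendreP n).eval t * (legendreP m).eval t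
      = ∫ t in (-1:ℝ)..1, ((2 ^ n * (Nat.factorial n) : ℝ)⁻¹ * (2 ^ m * (Nat.factorial m) : ℝ)⁻¹)
          * ((Polynomial.derivative^[n] (((X : ℝ[X]) ^ 2 - 1) ^ n)).eval t
            * (Polynomial.derivative^[m] (((X : ℝ[X]) ^ 2 - 1) ^ m)).eval t) := by
        apply intervalIntegral.integral_congr
        intro t _
        simp only [legendreP_def', Polynomial.eval_mul, Polynomial.eval_C]
        ring
    _ = 0 := by rw [intervalIntegral.integral_const_mul, key, mul_zero]

lemma legendreP_orthogonal {n m : ℕ} (hnm : n ≠ m) :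
    ∫ t in (-1:ℝ)..1, (legendreP n).eval t * (legendreP m).eval t = 0 := by
  rcases Nat.lt_or_ge n m with h | h
  · exact legendreP_orthogonal_aux n m h
  · have h2 : m < n := by omega
    have := legendreP_orthogonal_aux m n h2
    rw [← this]
    apply intervalIntegral.integral_congr
    intro t _; ring

lemma legendreP_eval_one (m : ℕ) : (legendreP m).eval 1 = 1 := by
  rw [legendreP_def', Polynomial.eval_mul, Polynomial.eval_C, qpoly_factor,
    Polynomial.iterate_derivative_mul]
  rw [Polynomial.eval_finset_sum]
  rw [Finset.sum_eq_single 0]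
  · simp only [Nat.choose_zero_right, Nat.sub_zero, one_smul,
      Polynomial.iterate_derivative_X_sub_pow_self, Function.iterate_zero_apply,
      Polynomial.eval_mul]
    simp only [Polynomial.eval_natCast, Polynomial.eval_pow, Polynomial.eval_sub,
      Polynomial.eval_X, Polynomial.eval_C]
    rw [(by norm_num : (1 : ℝ) - (-1) = 2)]
    rw [inv_mul_eq_one₀ (by positivity)]
    ring
  · intro j hj hj0
    rw [Polynomial.iterate_derivative_X_sub_pow]
    have hjm : j ≤ m := Nat.lt_succ_iff.mp (Finset.mem_range.mp hj)
    have hmj : m - (m - j) = j := by omega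
    rw [hmj]
    simp only [smul_mul_assoc, Polynomial.eval_smul, Polynomial.eval_mul, smul_eq_mul]
    have : ((X : ℝ[X]) - C 1).eval 1 = 0 := by simp
    rw [Polynomial.eval_pow, Polynomial.eval_sub, Polynomial.eval_X, Polynomial.eval_C,
      sub_self, zero_pow hj0]
    ring
  · intro h; simp at h

lemma legendreP_sq_pos (m : ℕ) :
    0 < ∫ t in (-1:ℝ)..1, ((legendreP m).eval t) ^ 2 := by
  have hc : ContinuousAt (fun x : ℝ => (legendreP m).eval x) 1 :=
    (legendreP m).continuous.continuousAt
  rw [Metric.continuousAt_iff] at hc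
  obtain ⟨δ, hδ, hball⟩ := hc (1/2) (by norm_num)
  set ε : ℝ := min (δ/2) 1 with hε
  have hε0 : 0 < ε := lt_min (by linarith) one_pos
  have hε1 : ε ≤ 1 := min_le_right _ _
  have hlow : ∀ x ∈ Set.Icc (1 - ε) 1, (1:ℝ)/4 ≤ ((legendreP m).eval x) ^ 2 := by
    intro x hx
    have hd : dist x 1 < δ := by
      rw [Real.dist_eq]
      have h1 : ε ≤ δ/2 := min_le_left _ _
      rw [abs_lt]
      constructor <;> [linarith [hx.1]; linarith [hx.2]]
    have := hball hd
    rw [Real.dist_eq, legendreP_eval_one] at this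
    have h2 : (1:ℝ)/2 ≤ (legendreP m).eval x := by
      cases abs_lt.mp this; linarith
    nlinarith
  have step1 : ∫ t in (1-ε)..1, (1:ℝ)/4 ≤ ∫ t in (1-ε)..1, ((legendreP m).eval t) ^ 2 := by
    apply intervalIntegral.integral_mono_on (by linarith)
      (intervalIntegrable_const)
      (((legendreP m).continuous.pow 2).intervalIntegrable _ _)
    exact hlow
  have step2 : ∫ t in (1-ε)..1, ((legendreP m).eval t) ^ 2
      ≤ ∫ t in (-1:ℝ)..1, ((legendreP m).eval t) ^ 2 := by
    apply intervalIntegral.integral_mono_interval (by linarith) (by linarith) le_rfl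
    · filter_upwards with x
      positivity
    · exact ((legendreP m).continuous.pow 2).intervalIntegrable _ _
  have step0 : (0:ℝ) < ∫ t in (1-ε)..1, (1:ℝ)/4 := by
    rw [intervalIntegral.integral_const]
    simp only [smul_eq_mul]
    nlinarith
  linarith

lemma span_family (L : ℕ → ℝ[X]) (hdeg : ∀ m, (L m).natDegree = m)
    (hlc : ∀ m, (L m).coeff m ≠ 0) :
    ∀ n (p : ℝ[X]), p.natDegree ≤ n →
      ∃ d : ℕ → ℝ, p = ∑ m ∈ Finset.range (n+1), Polynomial.C (d m) * L m := by
  intro n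
  induction n with
  | zero =>
    intro p hp
    refine ⟨fun _ => p.coeff 0 / (L 0).coeff 0, ?_⟩
    rw [Finset.sum_range_one]
    conv_lhs => rw [Polynomial.eq_C_of_natDegree_le_zero hp]
    conv_rhs => rw [Polynomial.eq_C_of_natDegree_le_zero (le_of_eq (hdeg 0))]
    rw [← Polynomial.C_mul, Polynomial.coeff_C_zero]
    rw [div_mul_cancel₀ _ (hlc 0)]
  | succ n ih =>
    intro p hp
    set e : ℝ := p.coeff (n+1) / (L (n+1)).coeff (n+1) with he
    have h2 : (p - Polynomial.C e * L (n+1)).natDegree ≤ n := by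
      rw [Polynomial.natDegree_le_iff_coeff_eq_zero]
      intro N hN
      rw [Polynomial.coeff_sub, Polynomial.coeff_C_mul]
      rcases Nat.lt_or_ge (n+1) N with h | h
      · rw [Polynomial.coeff_eq_zero_of_natDegree_lt (lt_of_le_of_lt hp h),
          Polynomial.coeff_eq_zero_of_natDegree_lt (lt_of_le_of_lt (le_of_eq (hdeg (n+1))) h)]
        ring
      · have hNn : N = n + 1 := by omega
        rw [hNn, he, div_mul_cancel₀ _ (hlc (n+1)), sub_self]
    obtain ⟨d, hd⟩ := ih _ h2
    refine ⟨fun m => if m = n+1 then e else d m, ?_⟩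
    rw [Finset.sum_range_succ]
    simp only [if_true]
    have : ∑ m ∈ Finset.range (n+1), Polynomial.C (if m = n+1 then e else d m) * L m
        = ∑ m ∈ Finset.range (n+1), Polynomial.C (d m) * L m := by
      apply Finset.sum_congr rfl
      intro m hm
      rw [if_neg (by have := Finset.mem_range.mp hm; omega)]
    rw [this, ← hd]
    ring

lemma derivative_polyAnti (a : ℝ) (p : ℝ[X]) :
    Polynomial.derivative (polyAnti a p) = p := by
  unfold polyAnti
  rw [Polynomial.derivative_sub, Polynomial.derivative_C, sub_zero, Polynomial.derivative_sum]
  have hterm : ∀ n ∈ Finset.range (p.natDegree + 1),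
      Polynomial.derivative (Polynomial.C (p.coeff n / (n + 1)) * X ^ (n+1))
        = Polynomial.C (p.coeff n) * X ^ n := by
    intro n _
    rw [Polynomial.derivative_C_mul, Polynomial.derivative_X_pow]
    have hn : ((n:ℝ) + 1) ≠ 0 := by positivity
    rw [← mul_assoc, ← Polynomial.C_mul]
    push_cast
    rw [div_mul_cancel₀ _ hn]
  rw [Finset.sum_congr rfl hterm]
  conv_rhs => rw [Polynomial.as_sum_range' p (p.natDegree + 1) (Nat.lt_succ_self _)]
  apply Finset.sum_congr rfl
  intro n _
  rw [Polynomial.C_mul_X_pow_eq_monomial]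

lemma polyAnti_eval_left (a : ℝ) (p : ℝ[X]) : (polyAnti a p).eval a = 0 := by
  unfold polyAnti
  rw [Polynomial.eval_sub, Polynomial.eval_C, Polynomial.eval_finset_sum, sub_eq_zero]
  apply Finset.sum_congr rfl
  intro n _
  simp

lemma polyAnti_eval (a x : ℝ) (p : ℝ[X]) :
    (polyAnti a p).eval x = ∫ t in a..x, p.eval t := by
  have := polyFTC (polyAnti a p) a x
  rw [derivative_polyAnti, polyAnti_eval_left, sub_zero] at this
  exact this.symm


lemma sub_ne (a b : ℝ) (hab : a < b) : b - a ≠ 0 := sub_ne_zero_of_ne (ne_of_gt hab)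

lemma affine_left (a b : ℝ) (hab : a < b) : 2/(b-a) * a + (-(a+b)/(b-a)) = -1 := by
  have h := sub_ne a b hab
  field_simp
  ring

lemma affine_right (a b : ℝ) (hab : a < b) : 2/(b-a) * b + (-(a+b)/(b-a)) = 1 := by
  have h := sub_ne a b hab
  field_simp
  ring

lemma c_ne_zero (a b : ℝ) (hab : a < b) : 2/(b-a) ≠ 0 := by
  have h : 0 < b - a := by linarith
  positivity

lemma intOn (a b : ℝ) (hab : a < b) (f : ℝ → ℝ) :
    ∫ t in a..b, f (2/(b-a) * t + (-(a+b)/(b-a)))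
      = ((b-a)/2) * ∫ x in (-1:ℝ)..1, f x := by
  rw [intervalIntegral.integral_comp_mul_add f (c_ne_zero a b hab) (-(a+b)/(b-a)),
    affine_left a b hab, affine_right a b hab, smul_eq_mul]
  congr 1
  rw [inv_div]

lemma legOn_eval (a b : ℝ) (m : ℕ) (t : ℝ) :
    (legOn a b m).eval t = (legendreP m).eval (2/(b-a) * t + (-(a+b)/(b-a))) := by
  unfold legOn
  rw [Polynomial.eval_comp]
  simp

lemma legOn_eval_b (a b : ℝ) (hab : a < b) (m : ℕ) : (legOn a b m).eval b = 1 := by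
  rw [legOn_eval, affine_right a b hab, legendreP_eval_one]

lemma legOn_mul_integral (a b : ℝ) (hab : a < b) (m n : ℕ) :
    ∫ t in a..b, (legOn a b m).eval t * (legOn a b n).eval t
      = ((b-a)/2) * ∫ x in (-1:ℝ)..1, (legendreP m).eval x * (legendreP n).eval x := by
  rw [← intOn a b hab (fun x => (legendreP m).eval x * (legendreP n).eval x)]
  apply intervalIntegral.integral_congr
  intro t _
  simp only [legOn_eval]

lemma natDegree_legOn (a b : ℝ) (hab : a < b) (m : ℕ) : (legOn a b m).natDegree = m := by
  unfold legOn
  rw [Polynomial.natDegree_comp, natDegree_legendreP, Polynomial.natDegree_linear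
    (c_ne_zero a b hab), mul_one]

lemma coeff_legOn_ne_zero (a b : ℝ) (hab : a < b) (m : ℕ) : (legOn a b m).coeff m ≠ 0 := by
  have h1 : (legOn a b m).coeff m = (legOn a b m).leadingCoeff := by
    rw [Polynomial.leadingCoeff, natDegree_legOn a b hab]
  rw [h1]
  unfold legOn
  rw [Polynomial.leadingCoeff_comp (by rw [Polynomial.natDegree_linear (c_ne_zero a b hab)]; omega)]
  apply mul_ne_zero
  · rw [Polynomial.leadingCoeff, natDegree_legendreP]; exact coeff_legendreP_ne_zero m
  · apply pow_ne_zero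
    rw [Polynomial.leadingCoeff_linear (c_ne_zero a b hab)]
    exact c_ne_zero a b hab

lemma phi_eval (a b : ℝ) (hab : a < b) (m : ℕ) (x : ℝ) :
    (polyAnti a (legOn a b m)).eval x
      = ((b-a)/2) * (polyAnti (-1) (legendreP m)).eval (2/(b-a) * x + (-(a+b)/(b-a))) := by
  rw [polyAnti_eval, polyAnti_eval]
  have h1 : ∫ t in a..x, (legOn a b m).eval t
      = ∫ t in a..x, (fun s => (legendreP m).eval s) (2/(b-a) * t + (-(a+b)/(b-a))) := by
    apply intervalIntegral.integral_congr
    intro t _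
    simp only [legOn_eval]
  have h2 := intervalIntegral.integral_comp_mul_add (a := a) (b := x)
    (fun s => (legendreP m).eval s) (c_ne_zero a b hab) (-(a+b)/(b-a))
  rw [h1, h2, affine_left a b hab, smul_eq_mul, inv_div]

lemma phi_sq_integral (a b : ℝ) (hab : a < b) (m : ℕ) :
    ∫ x in a..b, ((polyAnti a (legOn a b m)).eval x) ^ 2
      = ((b-a)/2)^3 * ∫ y in (-1:ℝ)..1, ((polyAnti (-1) (legendreP m)).eval y) ^ 2 := by
  have h1 : ∫ x in a..b, ((polyAnti a (legOn a b m)).eval x) ^ 2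
      = ∫ x in a..b, ((b-a)/2)^2 * (fun y => ((polyAnti (-1) (legendreP m)).eval y) ^ 2)
          (2/(b-a) * x + (-(a+b)/(b-a))) := by
    apply intervalIntegral.integral_congr
    intro x _
    simp only [phi_eval a b hab]
    ring
  rw [h1, intervalIntegral.integral_const_mul,
    intOn a b hab (fun y => ((polyAnti (-1) (legendreP m)).eval y) ^ 2)]
  ring



set_option maxHeartbeats 1000000 in
/-- On `V = [a,b]` of length `h`, with `ᾱ > 0` a constant and a bounded
linear functional `F : v ↦ (g, v*)` satisfying `|F v| ≤ ‖g‖_∞ √h ‖v‖_{L²}`, the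
polynomial `w₁` of degree `≤ k` determined by `w₁(b) = 0` and
`(ᾱ w₁, v')_{V} = (g, v*)_{V}` for the test functions `v = φ_{m+1}` (antiderivatives of
the shifted Legendre polynomials, `m = 0,...,k−1`) exists, is unique, and its Legendre
coefficients `c_m = ((2m+1)/h) ∫_V w₁ L_m` satisfy `|c_m| ≤ C (h/ᾱ) ‖g‖_∞` for all
`m = 0,...,k`; hence `‖w₁‖_{L²(V)} ≤ C (h^{3/2}/ᾱ) ‖g‖_∞`. -/
theorem correction_function_exists_unique_bounds (k : ℕ) (hk : 1 ≤ k) :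
    ∃ C : ℝ, 0 < C ∧
      ∀ a b ᾱ Mg : ℝ, a < b → 0 < ᾱ → 0 ≤ Mg →
      ∀ F : Polynomial ℝ →ₗ[ℝ] ℝ,
        (∀ v : Polynomial ℝ,
          |F v| ≤ Mg * Real.sqrt (b - a) * Real.sqrt (∫ t in a..b, (v.eval t)^2)) →
        (∃! w : Polynomial ℝ, w.natDegree ≤ k ∧ w.eval b = 0 ∧
            ∀ m : Fin k,
              ᾱ * (∫ t in a..b, w.eval t * (legOn a b (m : ℕ)).eval t)
                = F (polyAnti a (legOn a b (m : ℕ))))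
        ∧ ∀ w : Polynomial ℝ,
            (w.natDegree ≤ k ∧ w.eval b = 0 ∧
              ∀ m : Fin k,
                ᾱ * (∫ t in a..b, w.eval t * (legOn a b (m : ℕ)).eval t)
                  = F (polyAnti a (legOn a b (m : ℕ)))) →
            ((∀ m : Fin (k+1),
                |(2 * (m : ℕ) + 1) / (b - a) *
                    ∫ t in a..b, w.eval t * (legOn a b (m : ℕ)).eval t|
                  ≤ C * ((b - a) / ᾱ) * Mg)
             ∧ Real.sqrt (∫ t in a..b, (w.eval t)^2)
                  ≤ C * ((b - a) * Real.sqrt (b - a) / ᾱ) * Mg) := by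
  classical
  set γ : ℕ → ℝ := fun m => ∫ t in (-1:ℝ)..1, ((legendreP m).eval t) ^ 2 with hγdef
  set β : ℕ → ℝ := fun m => ∫ t in (-1:ℝ)..1, ((polyAnti (-1) (legendreP m)).eval t) ^ 2
    with hβdef
  have hγpos : ∀ m, 0 < γ m := fun m => legendreP_sq_pos m
  have hβ0 : ∀ m, 0 ≤ β m := fun m =>
    intervalIntegral.integral_nonneg (by norm_num) (fun x _ => sq_nonneg _)
  set K : ℕ → ℝ := fun m => 2 * Real.sqrt (β m / 8) / γ m with hKdef
  have hK0 : ∀ m, 0 ≤ K m := fun m =>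
    div_nonneg (by positivity) (le_of_lt (hγpos m))
  set D : ℝ := ∑ m ∈ Finset.range (k+1), K m with hDdef
  set Γ : ℝ := ∑ m ∈ Finset.range (k+1), γ m with hΓdef
  have hD0 : 0 ≤ D := Finset.sum_nonneg fun m _ => hK0 m
  have hΓ0 : 0 ≤ Γ := Finset.sum_nonneg fun m _ => le_of_lt (hγpos m)
  refine ⟨1 + (2*k+1) * Γ * D / 2 + Real.sqrt Γ * D, by positivity, ?_⟩
  intro a b ᾱ Mg hab hᾱ hMg F hF
  have hh : 0 < b - a := by linarith
  have hγab : ∀ m n : ℕ, m ≠ n →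
      ∫ t in a..b, (legOn a b m).eval t * (legOn a b n).eval t = 0 := by
    intro m n hmn
    rw [legOn_mul_integral a b hab m n, legendreP_orthogonal hmn, mul_zero]
  have hγab2 : ∀ n : ℕ,
      ∫ t in a..b, (legOn a b n).eval t * (legOn a b n).eval t = (b-a)/2 * γ n := by
    intro n
    rw [legOn_mul_integral a b hab n n]
    congr 1
    apply intervalIntegral.integral_congr
    intro t _
    simp only [pow_two]
  -- inner products of a represented polynomial with legOn
  have hip : ∀ (d : ℕ → ℝ) (n : ℕ), n ≤ k →
      ∫ t in a..b,
        (∑ m ∈ Finset.range (k+1), Polynomial.C (d m) * legOn a b m).eval t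
          * (legOn a b n).eval t
        = d n * ((b-a)/2 * γ n) := by
    intro d n hn
    have h1 : ∀ t : ℝ,
        (∑ m ∈ Finset.range (k+1), Polynomial.C (d m) * legOn a b m).eval t
            * (legOn a b n).eval t
          = ∑ m ∈ Finset.range (k+1),
              d m * ((legOn a b m).eval t * (legOn a b n).eval t) := by
      intro t
      rw [Polynomial.eval_finset_sum, Finset.sum_mul]
      refine Finset.sum_congr rfl fun m _ => ?_
      rw [Polynomial.eval_mul, Polynomial.eval_C]
      ring
    calc ∫ t in a..b,
          (∑ m ∈ Finset.range (k+1), Polynomial.C (d m) * legOn a b m).eval t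
            * (legOn a b n).eval t
        = ∫ t in a..b, ∑ m ∈ Finset.range (k+1),
            d m * ((legOn a b m).eval t * (legOn a b n).eval t) :=
          intervalIntegral.integral_congr (fun t _ => h1 t)
      _ = ∑ m ∈ Finset.range (k+1), ∫ t in a..b,
            d m * ((legOn a b m).eval t * (legOn a b n).eval t) :=
          intervalIntegral.integral_finset_sum
            (fun m _ => (polyII (legOn a b m) (legOn a b n) a b).const_mul (d m))
      _ = ∑ m ∈ Finset.range (k+1),
            d m * ∫ t in a..b, (legOn a b m).eval t * (legOn a b n).eval t :=
          Finset.sum_congr rfl fun m _ => intervalIntegral.integral_const_mul _ _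
      _ = d n * ((b-a)/2 * γ n) := by
          rw [Finset.sum_eq_single n]
          · rw [hγab2 n]
          · intro j _ hjn
            rw [hγab j n hjn, mul_zero]
          · intro hn'
            exact absurd (Finset.mem_range.mpr (by omega)) hn'
  -- pointwise evaluation of a represented polynomial
  have hevalsum : ∀ (d : ℕ → ℝ) (t : ℝ),
      (∑ m ∈ Finset.range (k+1), Polynomial.C (d m) * legOn a b m).eval t
        = ∑ m ∈ Finset.range (k+1), d m * (legOn a b m).eval t := by
    intro d t
    rw [Polynomial.eval_finset_sum]
    exact Finset.sum_congr rfl fun m _ => by rw [Polynomial.eval_mul, Polynomial.eval_C]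
  have hevalb : ∀ d : ℕ → ℝ,
      (∑ m ∈ Finset.range (k+1), Polynomial.C (d m) * legOn a b m).eval b
        = ∑ m ∈ Finset.range (k+1), d m := by
    intro d
    rw [hevalsum]
    exact Finset.sum_congr rfl fun m _ => by rw [legOn_eval_b a b hab, mul_one]
  have hFb : ∀ m : ℕ, |F (polyAnti a (legOn a b m))|
      ≤ Mg * ((b-a)^2 * Real.sqrt (β m / 8)) := by
    intro m
    have h1 := hF (polyAnti a (legOn a b m))
    rw [phi_sq_integral a b hab m] at h1
    have h2 : Real.sqrt (b-a) * Real.sqrt (((b-a)/2)^3 * ∫ y in (-1:ℝ)..1,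
          ((polyAnti (-1) (legendreP m)).eval y) ^ 2)
        = (b-a)^2 * Real.sqrt (β m / 8) := by
      rw [show ((b-a)/2)^3 * (∫ y in (-1:ℝ)..1, ((polyAnti (-1) (legendreP m)).eval y) ^ 2)
          = (b-a)^3 * (β m / 8) by rw [hβdef]; ring,
        Real.sqrt_mul (by positivity), ← mul_assoc,
        ← Real.sqrt_mul (le_of_lt hh),
        show (b-a) * (b-a)^3 = ((b-a)^2)^2 by ring,
        Real.sqrt_sq (by positivity)]
    calc |F (polyAnti a (legOn a b m))|
        ≤ Mg * Real.sqrt (b-a) * Real.sqrt (((b-a)/2)^3 * ∫ y in (-1:ℝ)..1,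
            ((polyAnti (-1) (legendreP m)).eval y) ^ 2) := h1
      _ = Mg * ((b-a)^2 * Real.sqrt (β m / 8)) := by rw [mul_assoc, h2]
  have hc0 : 0 ≤ (b-a)/ᾱ * Mg :=
    mul_nonneg (div_nonneg (le_of_lt hh) (le_of_lt hᾱ)) hMg
  -- uniqueness
  have huniq : ∀ w w' : Polynomial ℝ,
      (w.natDegree ≤ k ∧ w.eval b = 0 ∧ ∀ m : Fin k,
        ᾱ * (∫ t in a..b, w.eval t * (legOn a b (m : ℕ)).eval t)
          = F (polyAnti a (legOn a b (m : ℕ)))) →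
      (w'.natDegree ≤ k ∧ w'.eval b = 0 ∧ ∀ m : Fin k,
        ᾱ * (∫ t in a..b, w'.eval t * (legOn a b (m : ℕ)).eval t)
          = F (polyAnti a (legOn a b (m : ℕ)))) → w = w' := by
    rintro w w' ⟨hdeg, hb, hcond⟩ ⟨hdeg', hb', hcond'⟩
    have hu : (w - w').natDegree ≤ k :=
      le_trans (Polynomial.natDegree_sub_le w w') (max_le hdeg hdeg')
    obtain ⟨e, he⟩ := span_family (legOn a b) (natDegree_legOn a b hab)
      (coeff_legOn_ne_zero a b hab) k _ hu
    have hzero : ∀ n, n < k → e n = 0 := by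
      intro n hn
      have h1 := hcond ⟨n, hn⟩
      have h2 := hcond' ⟨n, hn⟩
      have h3 : ∫ t in a..b, (w - w').eval t * (legOn a b n).eval t = 0 := by
        have h4 : ∫ t in a..b, (w - w').eval t * (legOn a b n).eval t
            = (∫ t in a..b, w.eval t * (legOn a b n).eval t)
              - ∫ t in a..b, w'.eval t * (legOn a b n).eval t := by
          rw [← intervalIntegral.integral_sub (polyII w _ a b) (polyII w' _ a b)]
          apply intervalIntegral.integral_congr
          intro t _
          simp only [Polynomial.eval_sub]
          ring
        rw [h4, mul_left_cancel₀ (ne_of_gt hᾱ) (h1.trans h2.symm)]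
        ring
      rw [he, hip e n (by omega)] at h3
      have hne : (b-a)/2 * γ n ≠ 0 := by
        have := hγpos n
        have : 0 < (b-a)/2 * γ n := by
          apply mul_pos (by linarith) (hγpos n)
        exact ne_of_gt this
      exact (mul_eq_zero.mp h3).resolve_right hne
    have hbsum : ∑ m ∈ Finset.range (k+1), e m = 0 := by
      have h5 : (w - w').eval b = 0 := by
        rw [Polynomial.eval_sub, hb, hb', sub_zero]
      rw [he, hevalb e] at h5
      exact h5
    have hek : e k = 0 := by
      rw [Finset.sum_range_succ] at hbsum
      have h5 : ∑ m ∈ Finset.range k, e m = 0 :=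
        Finset.sum_eq_zero fun m hm => hzero m (Finset.mem_range.mp hm)
      linarith
    have hz : w - w' = 0 := by
      rw [he]
      apply Finset.sum_eq_zero
      intro m hm
      rcases Nat.lt_or_ge m k with h | h
      · rw [hzero m h]; simp
      · have hmk : m = k := by have := Finset.mem_range.mp hm; omega
        rw [hmk, hek]; simp
    exact sub_eq_zero.mp hz
  -- existence
  set c' : ℕ → ℝ := fun m =>
    if m = k then
      - ∑ j ∈ Finset.range k, F (polyAnti a (legOn a b j)) / (ᾱ * ((b-a)/2 * γ j))
    else F (polyAnti a (legOn a b m)) / (ᾱ * ((b-a)/2 * γ m)) with hc'def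
  set w₀ : Polynomial ℝ := ∑ m ∈ Finset.range (k+1), Polynomial.C (c' m) * legOn a b m
    with hw₀
  have hw₀deg : w₀.natDegree ≤ k := by
    rw [hw₀]
    apply Polynomial.natDegree_sum_le_of_forall_le
    intro m hm
    refine le_trans (Polynomial.natDegree_C_mul_le _ _) ?_
    rw [natDegree_legOn a b hab]
    exact Nat.lt_succ_iff.mp (Finset.mem_range.mp hm)
  have hw₀b : w₀.eval b = 0 := by
    rw [hw₀, hevalb, Finset.sum_range_succ]
    have h1 : c' k
        = - ∑ j ∈ Finset.range k, F (polyAnti a (legOn a b j)) / (ᾱ * ((b-a)/2 * γ j)) := by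
      rw [hc'def]; simp only [if_true]
    have h2 : ∑ m ∈ Finset.range k, c' m
        = ∑ j ∈ Finset.range k, F (polyAnti a (legOn a b j)) / (ᾱ * ((b-a)/2 * γ j)) := by
      apply Finset.sum_congr rfl
      intro m hm
      rw [hc'def]
      simp only
      rw [if_neg (by have := Finset.mem_range.mp hm; omega)]
    rw [h1, h2]
    ring
  have hw₀cond : ∀ m : Fin k,
      ᾱ * (∫ t in a..b, w₀.eval t * (legOn a b (m : ℕ)).eval t)
        = F (polyAnti a (legOn a b (m : ℕ))) := by
    intro m
    have hmk : (m : ℕ) ≤ k := le_of_lt m.isLt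
    rw [hw₀, hip c' (m : ℕ) hmk]
    have h1 : c' (m : ℕ)
        = F (polyAnti a (legOn a b (m : ℕ))) / (ᾱ * ((b-a)/2 * γ (m : ℕ))) := by
      rw [hc'def]
      simp only
      rw [if_neg (by have := m.isLt; omega)]
    rw [h1]
    have h5 : γ (m : ℕ) ≠ 0 := ne_of_gt (hγpos (m : ℕ))
    have h6 : (b - a) ≠ 0 := ne_of_gt hh
    have h7 : ᾱ ≠ 0 := ne_of_gt hᾱ
    field_simp
  constructor
  · exact ⟨w₀, ⟨hw₀deg, hw₀b, hw₀cond⟩,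
      fun y hy => huniq y w₀ hy ⟨hw₀deg, hw₀b, hw₀cond⟩⟩
  -- bounds
  intro w hw
  obtain ⟨hdeg, hb, hcond⟩ := hw
  obtain ⟨d, hd⟩ := span_family (legOn a b) (natDegree_legOn a b hab)
    (coeff_legOn_ne_zero a b hab) k w hdeg
  have hwint : ∀ n : ℕ, n ≤ k →
      ∫ t in a..b, w.eval t * (legOn a b n).eval t = d n * ((b-a)/2 * γ n) := by
    intro n hn
    rw [hd]
    exact hip d n hn
  have hds : ∀ m, m < k → |d m| ≤ K m * ((b-a)/ᾱ * Mg) := by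
    intro m hm
    have hc := hcond ⟨m, hm⟩
    rw [hwint m (by omega)] at hc
    have hP : 0 < ᾱ * ((b-a)/2 * γ m) :=
      mul_pos hᾱ (mul_pos (by linarith) (hγpos m))
    have habs : |d m| * (ᾱ * ((b-a)/2 * γ m)) = |F (polyAnti a (legOn a b m))| := by
      rw [← abs_of_pos hP, ← abs_mul, ← hc]
      congr 1
      ring
    rw [← mul_le_mul_iff_of_pos_right hP, habs]
    calc |F (polyAnti a (legOn a b m))|
        ≤ Mg * ((b-a)^2 * Real.sqrt (β m / 8)) := hFb m
      _ = K m * ((b-a)/ᾱ * Mg) * (ᾱ * ((b-a)/2 * γ m)) := by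
          rw [hKdef]
          simp only
          have h5 : γ m ≠ 0 := ne_of_gt (hγpos m)
          have h6 : (b - a) ≠ 0 := ne_of_gt hh
          have h7 : ᾱ ≠ 0 := ne_of_gt hᾱ
          field_simp
  have hsum0 : ∑ m ∈ Finset.range (k+1), d m = 0 := by
    have h0 : w.eval b = 0 := hb
    rw [hd, hevalb d] at h0
    exact h0
  have hdk : |d k| ≤ D * ((b-a)/ᾱ * Mg) := by
    have h1 : d k = - ∑ m ∈ Finset.range k, d m := by
      rw [Finset.sum_range_succ] at hsum0
      linarith
    rw [h1, abs_neg]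
    calc |∑ m ∈ Finset.range k, d m|
        ≤ ∑ m ∈ Finset.range k, |d m| := Finset.abs_sum_le_sum_abs _ _
      _ ≤ ∑ m ∈ Finset.range k, K m * ((b-a)/ᾱ * Mg) :=
          Finset.sum_le_sum fun m hm => hds m (Finset.mem_range.mp hm)
      _ = (∑ m ∈ Finset.range k, K m) * ((b-a)/ᾱ * Mg) := (Finset.sum_mul _ _ _).symm
      _ ≤ D * ((b-a)/ᾱ * Mg) := by
          apply mul_le_mul_of_nonneg_right _ hc0
          rw [hDdef]
          exact Finset.sum_le_sum_of_subset_of_nonneg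
            (Finset.range_subset_range.mpr (by omega)) (fun i _ _ => hK0 i)
  have hdall : ∀ m, m ≤ k → |d m| ≤ D * ((b-a)/ᾱ * Mg) := by
    intro m hm
    rcases Nat.lt_or_ge m k with h | h
    · refine le_trans (hds m h) (mul_le_mul_of_nonneg_right ?_ hc0)
      rw [hDdef]
      exact Finset.single_le_sum (fun i _ => hK0 i) (Finset.mem_range.mpr (by omega))
    · have : m = k := by omega
      rw [this]
      exact hdk
  constructor
  · -- coefficient bounds
    intro m
    have hnk : (m : ℕ) ≤ k := Nat.lt_succ_iff.mp m.isLt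
    rw [hwint (m : ℕ) hnk]
    have heq : (2 * ((m : ℕ) : ℝ) + 1) / (b-a) * (d (m : ℕ) * ((b-a)/2 * γ (m : ℕ)))
        = ((2 * ((m : ℕ) : ℝ) + 1) * γ (m : ℕ) / 2) * d (m : ℕ) := by
      field_simp
    have hcoef : 0 < (2 * ((m : ℕ) : ℝ) + 1) * γ (m : ℕ) / 2 :=
      div_pos (mul_pos (by positivity) (hγpos (m : ℕ))) two_pos
    rw [heq, abs_mul, abs_of_pos hcoef]
    have hγΓ : γ (m : ℕ) ≤ Γ := by
      rw [hΓdef]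
      exact Finset.single_le_sum (fun i _ => le_of_lt (hγpos i))
        (Finset.mem_range.mpr (by omega))
    have hcast : ((m : ℕ) : ℝ) ≤ (k : ℝ) := Nat.cast_le.mpr hnk
    have hcoefle : (2 * ((m : ℕ) : ℝ) + 1) * γ (m : ℕ) / 2 ≤ (2 * (k : ℝ) + 1) * Γ / 2 := by
      gcongr
      all_goals first
        | exact hγΓ
        | exact hcast
        | exact le_of_lt (hγpos (m : ℕ))
        | positivity
    have hb1 : (0:ℝ) ≤ (2 * (k : ℝ) + 1) * Γ / 2 :=
      div_nonneg (mul_nonneg (by positivity) hΓ0) (by norm_num)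
    have hCle : (2 * (k : ℝ) + 1) * Γ * D / 2
        ≤ 1 + (2 * (k : ℝ) + 1) * Γ * D / 2 + Real.sqrt Γ * D := by
      have h1 : 0 ≤ Real.sqrt Γ * D := mul_nonneg (Real.sqrt_nonneg _) hD0
      linarith
    calc ((2 * ((m : ℕ) : ℝ) + 1) * γ (m : ℕ) / 2) * |d (m : ℕ)|
        ≤ ((2 * (k : ℝ) + 1) * Γ / 2) * (D * ((b-a)/ᾱ * Mg)) :=
          mul_le_mul hcoefle (hdall (m : ℕ) hnk) (abs_nonneg _)
            (le_trans hb1 (le_refl _))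
      _ = ((2 * (k : ℝ) + 1) * Γ * D / 2) * ((b-a)/ᾱ * Mg) := by ring
      _ ≤ (1 + (2 * (k : ℝ) + 1) * Γ * D / 2 + Real.sqrt Γ * D) * ((b-a)/ᾱ * Mg) :=
          mul_le_mul_of_nonneg_right hCle hc0
      _ = (1 + (2 * (k : ℝ) + 1) * Γ * D / 2 + Real.sqrt Γ * D) * ((b-a)/ᾱ) * Mg := by
          ring
  · -- L² bound
    have hpoint : ∀ t : ℝ, (w.eval t)^2
        = ∑ m ∈ Finset.range (k+1), d m * (w.eval t * (legOn a b m).eval t) := by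
      intro t
      have hwt : w.eval t = ∑ m ∈ Finset.range (k+1), d m * (legOn a b m).eval t := by
        rw [hd, hevalsum]
      have h2 : ∑ m ∈ Finset.range (k+1), d m * (w.eval t * (legOn a b m).eval t)
          = w.eval t * ∑ m ∈ Finset.range (k+1), d m * (legOn a b m).eval t := by
        rw [Finset.mul_sum]
        exact Finset.sum_congr rfl fun m _ => by ring
      rw [h2, ← hwt, pow_two]
    have hJ : ∫ t in a..b, (w.eval t)^2
        = ∑ m ∈ Finset.range (k+1), d m * (d m * ((b-a)/2 * γ m)) := by
      calc ∫ t in a..b, (w.eval t)^2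
          = ∫ t in a..b, ∑ m ∈ Finset.range (k+1),
              d m * (w.eval t * (legOn a b m).eval t) :=
            intervalIntegral.integral_congr fun t _ => hpoint t
        _ = ∑ m ∈ Finset.range (k+1), ∫ t in a..b,
              d m * (w.eval t * (legOn a b m).eval t) :=
            intervalIntegral.integral_finset_sum
              (fun m _ => (polyII w (legOn a b m) a b).const_mul (d m))
        _ = ∑ m ∈ Finset.range (k+1),
              d m * ∫ t in a..b, w.eval t * (legOn a b m).eval t :=
            Finset.sum_congr rfl fun m _ => intervalIntegral.integral_const_mul _ _
        _ = ∑ m ∈ Finset.range (k+1), d m * (d m * ((b-a)/2 * γ m)) :=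
            Finset.sum_congr rfl fun m hm => by
              rw [hwint m (Nat.lt_succ_iff.mp (Finset.mem_range.mp hm))]
    set E : ℝ := D * ((b-a)/ᾱ * Mg) with hE
    have hE0 : 0 ≤ E := mul_nonneg hD0 hc0
    have hJle : ∫ t in a..b, (w.eval t)^2 ≤ (b-a)/2 * Γ * E^2 := by
      rw [hJ]
      calc ∑ m ∈ Finset.range (k+1), d m * (d m * ((b-a)/2 * γ m))
          ≤ ∑ m ∈ Finset.range (k+1), (b-a)/2 * γ m * E^2 := by
            apply Finset.sum_le_sum
            intro m hm
            have hmk : m ≤ k := Nat.lt_succ_iff.mp (Finset.mem_range.mp hm)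
            have h1 : d m * (d m * ((b-a)/2 * γ m)) = (b-a)/2 * γ m * (d m)^2 := by
              ring
            rw [h1]
            apply mul_le_mul_of_nonneg_left _ (le_of_lt (mul_pos (by linarith) (hγpos m)))
            rw [← sq_abs]
            exact pow_le_pow_left₀ (abs_nonneg _) (hdall m hmk) 2
        _ = (b-a)/2 * Γ * E^2 := by
            rw [← Finset.sum_mul, ← Finset.mul_sum, ← hΓdef]
    have hsq : Real.sqrt (∫ t in a..b, (w.eval t)^2) ≤ Real.sqrt ((b-a)/2 * Γ * E^2) :=
      Real.sqrt_le_sqrt hJle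
    have h2 : Real.sqrt ((b-a)/2 * Γ * E^2) = Real.sqrt ((b-a)/2 * Γ) * E := by
      rw [Real.sqrt_mul (mul_nonneg (by linarith) hΓ0), Real.sqrt_sq hE0]
    have h3 : Real.sqrt ((b-a)/2 * Γ) ≤ Real.sqrt (b-a) * Real.sqrt Γ := by
      rw [← Real.sqrt_mul (le_of_lt hh)]
      apply Real.sqrt_le_sqrt
      nlinarith [hΓ0, hh]
    have hX0 : 0 ≤ (b-a) * Real.sqrt (b-a) / ᾱ :=
      div_nonneg (mul_nonneg (le_of_lt hh) (Real.sqrt_nonneg _)) (le_of_lt hᾱ)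
    have hfinal : Real.sqrt Γ * D ≤ 1 + (2 * (k : ℝ) + 1) * Γ * D / 2 + Real.sqrt Γ * D := by
      have h4 : (0:ℝ) ≤ (2 * (k : ℝ) + 1) * Γ * D :=
        mul_nonneg (mul_nonneg (by positivity) hΓ0) hD0
      linarith
    calc Real.sqrt (∫ t in a..b, (w.eval t)^2)
        ≤ Real.sqrt ((b-a)/2 * Γ) * E := by rw [← h2]; exact hsq
      _ ≤ (Real.sqrt (b-a) * Real.sqrt Γ) * E := mul_le_mul_of_nonneg_right h3 hE0
      _ = (Real.sqrt Γ * D) * ((b-a) * Real.sqrt (b-a) / ᾱ) * Mg := by rw [hE]; ring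
      _ ≤ (1 + (2 * (k : ℝ) + 1) * Γ * D / 2 + Real.sqrt Γ * D)
            * ((b-a) * Real.sqrt (b-a) / ᾱ) * Mg :=
          mul_le_mul_of_nonneg_right (mul_le_mul_of_nonneg_right hfinal hX0) hMg
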